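/- For M = (0,1) the open interval, the locally finite simplicial volume is infinite: ‖M‖_lf = +∞; whereas for V = [0,1], the relative simplicial volume satisfies ‖V,∂V‖ = 1. -/

import Mathlib

open scoped ENNReal BigOperators

noncomputable section

namespace SimplexCategory

/-- The topological simplex associated to `x : SimplexCategory`
(the definition removed from Mathlib, restated with its old meaning). -/
def toTopObj (x : SimplexCategory) : Set (Fin (x.len + 1) → NNReal) :=
  { f | ∑ i, f i = 1 }

/-- A morphism in `SimplexCategory` induces a map on the associated topological spaces. -/
def toTopMap {x y : SimplexCategory} (f : x ⟶ y) (g : x.toTopObj) : y.toTopObj :=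
  ⟨fun i => ∑ j ∈ Finset.univ.filter (fun j => f.toOrderHom j = i), (g : Fin (x.len + 1) → NNReal) j, by
    have hg : ∑ j, (g : Fin (x.len + 1) → NNReal) j = 1 := g.2
    show (∑ i, ∑ j ∈ Finset.univ.filter (fun j => f.toOrderHom j = i),
      (g : Fin (x.len + 1) → NNReal) j) = 1
    rw [Finset.sum_fiberwise]
    exact hg⟩

theorem continuous_toTopMap {x y : SimplexCategory} (f : x ⟶ y) : Continuous (toTopMap f) := by
  refine Continuous.subtype_mk (continuous_pi fun i => ?_) _
  exact continuous_finset_sum _ (fun j _ => (continuous_apply _).comp continuous_subtype_val)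

end SimplexCategory

/-- A singular `q`-simplex in a topological space `M`: a continuous map from the
standard topological `q`-simplex to `M`. -/
abbrev SingSimplex (M : Type) [TopologicalSpace M] (q : ℕ) : Type :=
  C(SimplexCategory.toTopObj (SimplexCategory.mk q), M)

/-- The `i`-th face of a singular `(q+1)`-simplex. -/
def sFace {M : Type} [TopologicalSpace M] {q : ℕ} (i : Fin (q + 2))
    (σ : SingSimplex M (q + 1)) : SingSimplex M q :=
  σ.comp ⟨SimplexCategory.toTopMap (SimplexCategory.δ i),
    SimplexCategory.continuous_toTopMap _⟩

/-- The homogeneous coboundary of a (function-valued) singular cochain. -/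
def cobd {M : Type} [TopologicalSpace M] {q : ℕ} (f : SingSimplex M q → ℝ) :
    SingSimplex M (q + 1) → ℝ :=
  fun σ => ∑ i : Fin (q + 2), (-1 : ℝ) ^ (i : ℕ) * f (sFace i σ)

/-- The sup-norm of a cochain (possibly infinite). -/
def supNorm {α : Type*} (f : α → ℝ) : ℝ≥0∞ :=
  ⨆ x : α, (‖f x‖₊ : ℝ≥0∞)

/-- The boundary of a finite singular chain. -/
def chainBd {M : Type} [TopologicalSpace M] {q : ℕ}
    (c : SingSimplex M (q + 1) →₀ ℝ) : SingSimplex M q →₀ ℝ :=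
  c.sum fun σ a => ∑ i : Fin (q + 2), Finsupp.single (sFace i σ) ((-1 : ℝ) ^ (i : ℕ) * a)

/-- Evaluation of a cochain on a finite chain. -/
def evalChain {M : Type} [TopologicalSpace M] {q : ℕ}
    (f : SingSimplex M q → ℝ) (c : SingSimplex M q →₀ ℝ) : ℝ :=
  c.sum fun σ a => a * f σ

/-- The `ℓ¹`-norm of a finite chain. -/
def l1Fin {α : Type*} (c : α →₀ ℝ) : ℝ≥0∞ :=
  ∑ σ ∈ c.support, (‖c σ‖₊ : ℝ≥0∞)
/-- The seminorm `‖b‖_Φ = sup_{σ ∈ Φ} |b σ|` associated to a family `Φ` of simplices. -/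
def phiNorm {α : Type*} (Φ : Set α) (b : α → ℝ) : ℝ≥0∞ :=
  ⨆ σ ∈ Φ, (‖b σ‖₊ : ℝ≥0∞)

/-- A family of singular simplices is locally finite if every compact subset of `M`
meets the image of only finitely many of its members. -/
def LocFinFam {M : Type} [TopologicalSpace M] {q : ℕ} (Φ : Set (SingSimplex M q)) : Prop :=
  ∀ K : Set M, IsCompact K → {σ ∈ Φ | (Set.range σ ∩ K).Nonempty}.Finite

/-- A cochain has compact support if there is a compact `K ⊆ M` such that the cochain
vanishes on every simplex whose image misses `K`. -/
def HasCompactSupp {M : Type} [TopologicalSpace M] {q : ℕ} (f : SingSimplex M q → ℝ) : Prop :=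
  ∃ K : Set M, IsCompact K ∧ ∀ σ : SingSimplex M q, Set.range σ ∩ K = ∅ → f σ = 0
/-- The `ℓ¹`-norm of a (possibly infinite, e.g. locally finite) chain given by a
coefficient function. -/
def l1Lf {α : Type*} (z : α → ℝ) : ℝ≥0∞ :=
  ∑' σ : α, (‖z σ‖₊ : ℝ≥0∞)

/-- Evaluation of a cochain on a locally finite chain. -/
def lfEval {M : Type} [TopologicalSpace M] {q : ℕ}
    (f : SingSimplex M q → ℝ) (z : SingSimplex M q → ℝ) : ℝ :=
  ∑ᶠ σ : SingSimplex M q, z σ * f σ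

open Classical in
/-- The boundary of a locally finite chain. -/
def lfBd {M : Type} [TopologicalSpace M] {q : ℕ} (w : SingSimplex M (q + 1) → ℝ) :
    SingSimplex M q → ℝ :=
  fun τ => ∑ᶠ σ : SingSimplex M (q + 1),
    w σ * ∑ i : Fin (q + 2), (-1 : ℝ) ^ (i : ℕ) * (if sFace i σ = τ then 1 else 0)

/-- The set of compactly supported cocycle representatives of the compact-support
cohomology class of a cocycle `b` (in degree `q+1`). -/
def cptReps {M : Type} [TopologicalSpace M] (q : ℕ) (b : SingSimplex M (q + 1) → ℝ) :
    Set (SingSimplex M (q + 1) → ℝ) :=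
  {b' | HasCompactSupp b' ∧ ∃ g : SingSimplex M q → ℝ, HasCompactSupp g ∧ b' = b + cobd g}

/-- Gromov's seminorm `‖β‖^∞` of the compact-support cohomology class of a cocycle `b`:
the sup over locally finite families `Φ` of the inf over representatives of `‖·‖_Φ`. -/
def gromovNorm {M : Type} [TopologicalSpace M] (q : ℕ) (b : SingSimplex M (q + 1) → ℝ) :
    ℝ≥0∞ :=
  ⨆ Φ : Set (SingSimplex M (q + 1)), ⨆ _ : LocFinFam Φ, ⨅ b' ∈ cptReps q b, phiNorm Φ b'

end

noncomputable section

open Classical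

/-- The `k`-th vertex of the standard topological `n`-simplex. -/
def stdVertex {n : ℕ} (k : Fin (n + 1)) :
    SimplexCategory.toTopObj (SimplexCategory.mk n) :=
  ⟨fun i => if i = k then 1 else 0, by
    simp [SimplexCategory.toTopObj]⟩

/-- The open unit interval `(0,1)`. -/
abbrev Ioo01 : Type := Set.Ioo (0 : ℝ) 1

/-- The closed unit interval `[0,1]`. -/
abbrev Icc01 : Type := Set.Icc (0 : ℝ) 1

/-- A compactly supported singular `1`-cocycle on `(0,1)` representing the generator
`ω_M` of `H¹_cpct((0,1),ℝ)` dual to the fundamental class: the coboundary of the step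
function at `1/2`. -/
def stepCocycle : SingSimplex Ioo01 1 → ℝ :=
  fun σ =>
    (if (1 / 2 : ℝ) ≤ (σ (stdVertex 1) : ℝ) then (1 : ℝ) else 0) -
      (if (1 / 2 : ℝ) ≤ (σ (stdVertex 0) : ℝ) then (1 : ℝ) else 0)

/-- The set of locally finite fundamental cycles of `(0,1)`: locally finite `1`-cycles
pairing to `1` with the generator of `H¹_cpct((0,1),ℝ) ≅ ℝ`. -/
def FundIoo : Set (SingSimplex Ioo01 1 → ℝ) :=
  {z | LocFinFam {σ | z σ ≠ 0} ∧ lfBd z = 0 ∧ lfEval stepCocycle z = 1}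

/-- The point `0` of `[0,1]`. -/
def pt0 : Icc01 := ⟨0, by norm_num⟩

/-- The point `1` of `[0,1]`. -/
def pt1 : Icc01 := ⟨1, by norm_num⟩

/-- The set of relative fundamental cycles of `([0,1],{0,1})`: finite `1`-chains whose
boundary is supported on `{0,1}` with total coefficient `1` at the point `1` and `-1` at
the point `0`. -/
def FundIcc : Set (SingSimplex Icc01 1 →₀ ℝ) :=
  {c | (∀ σ ∈ (chainBd c).support, σ (stdVertex 0) = pt0 ∨ σ (stdVertex 0) = pt1) ∧
    (∑ σ ∈ (chainBd c).support,
      if σ (stdVertex 0) = pt1 then chainBd c σ else 0) = 1 ∧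
    (∑ σ ∈ (chainBd c).support,
      if σ (stdVertex 0) = pt0 then chainBd c σ else 0) = -1}

end

/-! For `(0,1)`: a fundamental cycle `z` pairs to `1` with the coboundary of the Heaviside
function at every `t ∈ (0,1)`, because two such cocycles differ by the coboundary of a
compactly supported `0`-cochain, and these vanish on locally finite cycles. If `‖z‖₁ < ∞`, all
of `z` except mass `< 1` lies on finitely many simplices, whose compact images stay above some
`t > 0`; the Heaviside cocycle at `t` has sup-norm `≤ 1` and vanishes on them, so the remaining
mass is `≥ 1`.

For `[0,1]`: the tautological simplex is a relative fundamental cycle of norm `1`, and for any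
relative fundamental cycle `c`, Stokes gives `1 = ⟨∂c, 1_{1}⟩ = ⟨c, δ1_{1}⟩ ≤ ‖c‖₁`. -/

open scoped NNReal
open Classical

namespace SimplexCategory

instance compactSpace_toTopObj (n : ℕ) : CompactSpace (toTopObj (mk n)) := by
  rw [← isCompact_iff_compactSpace]
  refine (isCompact_univ_pi fun _ => isCompact_Icc (a := (0 : ℝ≥0)) (b := 1)).of_isClosed_subset
    (isClosed_eq (by fun_prop) continuous_const) fun f hf i _ => ⟨zero_le, ?_⟩
  rw [← hf]
  exact Finset.single_le_sum (fun j _ => zero_le) (Finset.mem_univ i)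

lemma toTopMap_stdVertex {n m : ℕ} (f : mk n ⟶ mk m) (k : Fin (n + 1)) :
    toTopMap f (stdVertex k) = stdVertex (f.toOrderHom k) := by
  ext j
  simp [toTopMap, stdVertex, eq_comm]

def edgePath {n : ℕ} (i j : Fin (n + 1)) : Path (stdVertex i) (stdVertex j) where
  toFun s := ⟨Pi.single i (1 - s : ℝ).toNNReal + Pi.single j (s : ℝ).toNNReal, by
    show ∑ k, _ = (1 : ℝ≥0)
    rw [Finset.sum_congr rfl fun k _ => Pi.add_apply _ _ k, Finset.sum_add_distrib,
      Finset.sum_pi_single', Finset.sum_pi_single', if_pos (Finset.mem_univ _),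
      if_pos (Finset.mem_univ _), ← Real.toNNReal_add (by linarith [s.2.2]) s.2.1,
      sub_add_cancel, Real.toNNReal_one]⟩
  continuous_toFun := Continuous.subtype_mk
    (((continuous_single i).comp (by fun_prop)).add ((continuous_single j).comp (by fun_prop))) _
  source' := by ext k; simp [stdVertex, Pi.single_apply]
  target' := by ext k; simp [stdVertex, Pi.single_apply]

lemma exists_eq_of_mem_uIcc {f : toTopObj (mk 1) → ℝ} (hf : Continuous f) {t : ℝ}
    (ht : t ∈ Set.uIcc (f (stdVertex 0)) (f (stdVertex 1))) : ∃ p, f p = t := by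
  have hγ : Continuous fun s => f ((edgePath 0 1).extend s) := by fun_prop
  obtain ⟨s, -, hs⟩ := intermediate_value_uIcc (a := 0) (b := 1) hγ.continuousOn
    (by simpa using ht)
  exact ⟨_, hs⟩

end SimplexCategory

open SimplexCategory

section SingularChains

variable {M : Type} [TopologicalSpace M] {q : ℕ}

lemma range_sFace_subset (i : Fin (q + 2)) (σ : SingSimplex M (q + 1)) :
    Set.range (sFace i σ) ⊆ Set.range σ := by
  rintro _ ⟨p, rfl⟩
  exact ⟨_, rfl⟩

lemma sFace_zero_apply_stdVertex (σ : SingSimplex M 1) :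
    sFace 0 σ (stdVertex 0) = σ (stdVertex 1) :=
  congrArg σ (toTopMap_stdVertex _ _)

lemma sFace_one_apply_stdVertex (σ : SingSimplex M 1) :
    sFace 1 σ (stdVertex 0) = σ (stdVertex 0) :=
  congrArg σ (toTopMap_stdVertex _ _)

def pointCochain (h : M → ℝ) : SingSimplex M 0 → ℝ := fun τ => h (τ (stdVertex 0))

lemma cobd_pointCochain (h : M → ℝ) (σ : SingSimplex M 1) :
    cobd (pointCochain h) σ = h (σ (stdVertex 1)) - h (σ (stdVertex 0)) := by
  simp [cobd, Fin.sum_univ_two, pointCochain, sFace_zero_apply_stdVertex,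
    sFace_one_apply_stdVertex, sub_eq_add_neg]

lemma abs_cobd_pointCochain_le {h : M → ℝ} (h0 : ∀ x, 0 ≤ h x) (h1 : ∀ x, h x ≤ 1)
    (σ : SingSimplex M 1) : |cobd (pointCochain h) σ| ≤ 1 := by
  rw [cobd_pointCochain, abs_sub_le_iff]
  constructor <;> linarith [h0 (σ (stdVertex 0)), h1 (σ (stdVertex 0)),
    h0 (σ (stdVertex 1)), h1 (σ (stdVertex 1))]

lemma hasCompactSupp_pointCochain {h : M → ℝ} {K : Set M} (hK : IsCompact K)
    (hh : ∀ x ∉ K, h x = 0) : HasCompactSupp (pointCochain h) :=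
  ⟨K, hK, fun _ hτ => hh _ fun hx =>
    Set.eq_empty_iff_forall_notMem.mp hτ _ ⟨⟨_, rfl⟩, hx⟩⟩

lemma cobd_sub (f g : SingSimplex M q → ℝ) : cobd (f - g) = cobd f - cobd g := by
  ext σ
  simp [cobd, mul_sub, Finset.sum_sub_distrib]

lemma evalChain_chainBd (g : SingSimplex M q → ℝ) (c : SingSimplex M (q + 1) →₀ ℝ) :
    evalChain g (chainBd c) = evalChain (cobd g) c := by
  have hlin : ∀ d, evalChain g d = Finsupp.linearCombination ℝ g d := fun _ => rfl
  rw [hlin, chainBd, map_finsuppSum]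
  refine Finset.sum_congr rfl fun σ _ => ?_
  beta_reduce
  rw [map_sum, cobd, Finset.mul_sum]
  refine Finset.sum_congr rfl fun i _ => ?_
  rw [Finsupp.linearCombination_single, smul_eq_mul]
  ring

lemma chainBd_apply (c : SingSimplex M (q + 1) →₀ ℝ) (τ : SingSimplex M q) :
    chainBd c τ = evalChain (fun σ => ∑ i : Fin (q + 2),
      (-1 : ℝ) ^ (i : ℕ) * (if sFace i σ = τ then 1 else 0)) c := by
  rw [chainBd, evalChain, Finsupp.sum_apply]
  refine Finset.sum_congr rfl fun σ _ => ?_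
  beta_reduce
  rw [Finsupp.finsetSum_apply, Finset.mul_sum]
  refine Finset.sum_congr rfl fun i _ => ?_
  rw [Finsupp.single_apply]
  split_ifs <;> ring

lemma abs_sum_mul_le_sum_abs {α : Type*} (T : Finset α) {c f : α → ℝ}
    (hf : ∀ σ ∈ T, |f σ| ≤ 1) : |∑ σ ∈ T, c σ * f σ| ≤ ∑ σ ∈ T, |c σ| :=
  (Finset.abs_sum_le_sum_abs _ _).trans <| Finset.sum_le_sum fun σ hσ => by
    rw [abs_mul]; exact mul_le_of_le_one_right (abs_nonneg _) (hf σ hσ)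

lemma exists_finsupp_eq_of_meets {z : SingSimplex M q → ℝ} (hz : LocFinFam {σ | z σ ≠ 0})
    {K : Set M} (hK : IsCompact K) :
    ∃ c : SingSimplex M q →₀ ℝ, ∀ σ : SingSimplex M q, (Set.range σ ∩ K).Nonempty →
      c σ = z σ := by
  let meetsK : Set (SingSimplex M q) := {σ | (Set.range σ ∩ K).Nonempty}
  have hfin : (meetsK.indicator z).support.Finite := by
    rw [Set.support_indicator]
    exact (hz K hK).subset fun σ hσ => ⟨hσ.2, hσ.1⟩
  exact ⟨Finsupp.ofSupportFinite _ hfin, fun σ hσ => Set.indicator_of_mem (s := meetsK) hσ z⟩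

lemma lfEval_eq_evalChain {z f : SingSimplex M q → ℝ} {c : SingSimplex M q →₀ ℝ}
    (hc : ∀ σ, f σ ≠ 0 → c σ = z σ) : lfEval f z = evalChain f c := by
  rw [lfEval, evalChain, Finsupp.sum, ← finsum_eq_sum_of_support_subset]
  · refine finsum_congr fun σ => ?_
    by_cases hσ : f σ = 0
    · simp [hσ]
    · rw [hc σ hσ]
  · exact fun σ hσ => Finsupp.mem_support_iff.mpr (Function.support_mul_subset_left _ _ hσ)

/- Truncating `z` to the simplices that meet `supp g` gives a finite chain `c` with
`⟨z, δg⟩ = ⟨c, δg⟩ = ⟨∂c, g⟩`, and `∂c` agrees with `∂z = 0` on `supp g`. -/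
theorem lfEval_cobd_eq_zero {z : SingSimplex M (q + 1) → ℝ} {g : SingSimplex M q → ℝ}
    (hlf : LocFinFam {σ | z σ ≠ 0}) (hbd : lfBd z = 0) (hg : HasCompactSupp g) :
    lfEval (cobd g) z = 0 := by
  obtain ⟨K, hK, hgK⟩ := hg
  obtain ⟨c, hc⟩ := exists_finsupp_eq_of_meets hlf hK
  have hface : ∀ σ i, g (sFace i σ) ≠ 0 → c σ = z σ := fun σ i hi =>
    hc σ ((Set.nonempty_iff_ne_empty.mpr (mt (hgK _) hi)).mono
      (Set.inter_subset_inter_left K (range_sFace_subset i σ)))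
  have hbd_c : ∀ τ, g τ ≠ 0 → chainBd c τ = 0 := by
    intro τ hτ
    rw [chainBd_apply, ← lfEval_eq_evalChain (z := z)]
    · exact congrFun hbd τ
    · intro σ hσ
      obtain ⟨i, hi⟩ : ∃ i, sFace i σ = τ := by
        by_contra! h
        simp [h] at hσ
      exact hface σ i (hi ▸ hτ)
  rw [lfEval_eq_evalChain (c := c), ← evalChain_chainBd]
  · exact Finset.sum_eq_zero fun τ _ => by by_cases hτ : g τ = 0 <;> simp [hτ, hbd_c]
  · intro σ hσ
    obtain ⟨i, hi⟩ : ∃ i, g (sFace i σ) ≠ 0 := by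
      by_contra! h
      simp [cobd, h] at hσ
    exact hface σ i hi

end SingularChains

section OpenInterval

noncomputable def heaviside (t : ℝ) (x : Ioo01) : ℝ := if t ≤ (x : ℝ) then 1 else 0

lemma stepCocycle_eq_cobd : stepCocycle = cobd (pointCochain (heaviside (1 / 2))) := by
  ext σ
  rw [cobd_pointCochain]
  rfl

lemma abs_cobd_heaviside_le (t : ℝ) (σ : SingSimplex Ioo01 1) :
    |cobd (pointCochain (heaviside t)) σ| ≤ 1 :=
  abs_cobd_pointCochain_le (fun x => by unfold heaviside; split_ifs <;> norm_num)
    (fun x => by unfold heaviside; split_ifs <;> norm_num) σ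

lemma mem_range_of_cobd_heaviside_ne_zero {t : ℝ} (ht : t ∈ Set.Ioo 0 1)
    {σ : SingSimplex Ioo01 1} (hσ : cobd (pointCochain (heaviside t)) σ ≠ 0) :
    (⟨t, ht⟩ : Ioo01) ∈ Set.range σ := by
  have hstraddle : t ∈ Set.uIcc ((σ (stdVertex 0) : ℝ)) (σ (stdVertex 1)) := by
    rw [cobd_pointCochain] at hσ
    simp only [heaviside] at hσ
    rw [Set.mem_uIcc]
    split_ifs at hσ <;> first
      | (left; constructor <;> linarith) | (right; constructor <;> linarith) | (norm_num at hσ)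
  obtain ⟨p, hp⟩ :=
    exists_eq_of_mem_uIcc (continuous_subtype_val.comp σ.continuous) hstraddle
  exact ⟨p, Subtype.ext hp⟩

lemma support_mul_cobd_heaviside_finite {z : SingSimplex Ioo01 1 → ℝ}
    (hz : LocFinFam {σ | z σ ≠ 0}) {t : ℝ} (ht : t ∈ Set.Ioo 0 1) :
    (Function.support fun σ => z σ * cobd (pointCochain (heaviside t)) σ).Finite :=
  (hz {⟨t, ht⟩} isCompact_singleton).subset fun _ hσ =>
    ⟨left_ne_zero_of_mul hσ, _,
      mem_range_of_cobd_heaviside_ne_zero ht (right_ne_zero_of_mul hσ), rfl⟩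

lemma isCompact_preimage_uIcc {s t : ℝ} (hs : s ∈ Set.Ioo 0 1) (ht : t ∈ Set.Ioo 0 1) :
    IsCompact ((↑) ⁻¹' Set.uIcc s t : Set Ioo01) := by
  rw [Subtype.isCompact_iff, Subtype.image_preimage_coe,
    Set.inter_eq_right.mpr (Set.ordConnected_Ioo.uIcc_subset hs ht)]
  exact isCompact_uIcc

lemma hasCompactSupp_heaviside_sub {s t : ℝ} (hs : s ∈ Set.Ioo 0 1) (ht : t ∈ Set.Ioo 0 1) :
    HasCompactSupp (pointCochain (heaviside s - heaviside t)) :=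
  hasCompactSupp_pointCochain (isCompact_preimage_uIcc hs ht) fun x hx => by
    simp only [Set.mem_preimage, Set.mem_uIcc, not_or, not_and_or, not_le] at hx
    simp only [Pi.sub_apply, heaviside]
    split_ifs <;> norm_num <;> rcases hx with ⟨h1 | h1, h2 | h2⟩ <;> linarith

lemma lfEval_cobd_heaviside_eq {z : SingSimplex Ioo01 1 → ℝ} (hlf : LocFinFam {σ | z σ ≠ 0})
    (hbd : lfBd z = 0) {s t : ℝ} (hs : s ∈ Set.Ioo 0 1) (ht : t ∈ Set.Ioo 0 1) :
    lfEval (cobd (pointCochain (heaviside s))) z =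
      lfEval (cobd (pointCochain (heaviside t))) z := by
  refine sub_eq_zero.mp (Eq.trans ?_
    (lfEval_cobd_eq_zero hlf hbd (hasCompactSupp_heaviside_sub hs ht)))
  rw [lfEval, lfEval, lfEval, ← finsum_sub_distrib (support_mul_cobd_heaviside_finite hlf hs)
      (support_mul_cobd_heaviside_finite hlf ht)]
  refine finsum_congr fun σ => ?_
  rw [show pointCochain (heaviside s - heaviside t) =
    pointCochain (heaviside s) - pointCochain (heaviside t) from rfl, cobd_sub, Pi.sub_apply,
    mul_sub]

lemma exists_lt_forall_of_isCompact {K : Set Ioo01} (hK : IsCompact K) :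
    ∃ t ∈ Set.Ioo (0 : ℝ) 1, ∀ x ∈ K, t < x := by
  obtain ⟨m, -, hm⟩ := (hK.union (isCompact_singleton (x := ⟨1 / 2, by norm_num⟩))).exists_isMinOn
    (Set.union_nonempty.mpr (Or.inr (Set.singleton_nonempty _))) continuous_subtype_val.continuousOn
  refine ⟨m / 2, ⟨by linarith [m.2.1], by linarith [m.2.2]⟩, fun x hx => ?_⟩
  linarith [m.2.1, isMinOn_iff.mp hm x (Or.inl hx)]

theorem l1Lf_eq_top_of_mem_fundIoo {z : SingSimplex Ioo01 1 → ℝ} (hz : z ∈ FundIoo) :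
    l1Lf z = ⊤ := by
  obtain ⟨hlf, hbd, hev⟩ := hz
  by_contra hne
  have hsum : Summable fun σ => ‖z σ‖ := by
    simpa using NNReal.summable_coe.mpr (ENNReal.tsum_coe_ne_top_iff_summable.mp hne)
  obtain ⟨S, hS⟩ := summable_iff_vanishing.mp hsum (Set.Iio 1) (Iio_mem_nhds one_pos)
  obtain ⟨t, ht, hSt⟩ :=
    exists_lt_forall_of_isCompact (S.isCompact_biUnion fun σ _ => isCompact_range σ.continuous)
  set f := cobd (pointCochain (heaviside t)) with hf_def
  have hf : lfEval f z = 1 := by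
    rw [← lfEval_cobd_heaviside_eq hlf hbd (s := 1 / 2) (by norm_num) ht, ← stepCocycle_eq_cobd,
      hev]
  have hfS : ∀ σ ∈ S, f σ = 0 := fun σ hσ => by
    have hv : ∀ k, heaviside t (σ (stdVertex k)) = 1 := fun k =>
      if_pos (hSt _ (Set.mem_biUnion hσ ⟨_, rfl⟩)).le
    rw [hf_def, cobd_pointCochain, hv, hv, sub_self]
  have hfin := support_mul_cobd_heaviside_finite hlf ht
  have hdisj : Disjoint hfin.toFinset S := Finset.disjoint_left.mpr fun σ hσT hσS => by
    simp [f, hfS σ hσS] at hσT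
  have hge : 1 ≤ ∑ σ ∈ hfin.toFinset, ‖z σ‖ :=
    calc 1 = |lfEval f z| := by rw [hf, abs_one]
      _ = |∑ σ ∈ hfin.toFinset, z σ * f σ| := by rw [lfEval, finsum_eq_sum _ hfin]
      _ ≤ ∑ σ ∈ hfin.toFinset, ‖z σ‖ :=
        abs_sum_mul_le_sum_abs _ fun σ _ => abs_cobd_heaviside_le t σ
  exact absurd (hS _ hdisj) (not_lt.mpr hge)

end OpenInterval

section ClosedInterval

lemma l1Fin_eq_ofReal {α : Type*} (c : α →₀ ℝ) :
    l1Fin c = ENNReal.ofReal (∑ σ ∈ c.support, |c σ|) := by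
  rw [l1Fin, ENNReal.ofReal_sum_of_nonneg fun _ _ => abs_nonneg _]
  exact Finset.sum_congr rfl fun σ _ => (Real.enorm_eq_ofReal_abs _)

def intervalSimplex : SingSimplex Icc01 1 :=
  ⟨fun p => ⟨(p : Fin 2 → ℝ≥0) 1, (p.1 1).2, by
    have hp : ∑ j, (p : Fin 2 → ℝ≥0) j = 1 := p.2
    rw [Fin.sum_univ_two] at hp
    exact_mod_cast hp ▸ le_add_self⟩, Continuous.subtype_mk
    (NNReal.continuous_coe.comp ((continuous_apply 1).comp continuous_subtype_val)) _⟩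

lemma sFace_zero_intervalSimplex : sFace 0 intervalSimplex (stdVertex 0) = pt1 := by
  rw [sFace_zero_apply_stdVertex]
  ext
  simp [intervalSimplex, stdVertex, pt1]

lemma sFace_one_intervalSimplex : sFace 1 intervalSimplex (stdVertex 0) = pt0 := by
  rw [sFace_one_apply_stdVertex]
  ext
  simp [intervalSimplex, stdVertex, pt0]

lemma single_intervalSimplex_mem_fundIcc : Finsupp.single intervalSimplex 1 ∈ FundIcc := by
  have hpt : pt0 ≠ pt1 := fun h => zero_ne_one (congrArg Subtype.val h)
  have hne : sFace 0 intervalSimplex ≠ sFace 1 intervalSimplex := fun h => hpt <| by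
    rw [← sFace_zero_intervalSimplex, ← sFace_one_intervalSimplex, h]
  have hbd : chainBd (Finsupp.single intervalSimplex 1) =
      Finsupp.single (sFace 0 intervalSimplex) 1 +
        Finsupp.single (sFace 1 intervalSimplex) (-1) := by
    rw [chainBd, Finsupp.sum_single_index (by simp), Fin.sum_univ_two]
    norm_num
  have hsupp : (chainBd (Finsupp.single intervalSimplex 1)).support ⊆
      {sFace 0 intervalSimplex, sFace 1 intervalSimplex} := by
    rw [hbd]
    refine Finsupp.support_add.trans (Finset.union_subset ?_ ?_) <;>
      exact Finsupp.support_single_subset.trans (by simp)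
  refine ⟨fun τ hτ => ?_, ?_, ?_⟩
  · rcases Finset.mem_insert.mp (hsupp hτ) with rfl | hτ
    · exact Or.inr sFace_zero_intervalSimplex
    · rw [Finset.mem_singleton.mp hτ]
      exact Or.inl sFace_one_intervalSimplex
  all_goals
    rw [Finset.sum_subset hsupp fun τ _ hτ => by simp [Finsupp.notMem_support_iff.mp hτ],
      Finset.sum_pair hne, hbd]
    simp [sFace_zero_intervalSimplex, sFace_one_intervalSimplex, hne, hne.symm, hpt, hpt.symm]

lemma one_le_l1Fin_of_mem_fundIcc {c : SingSimplex Icc01 1 →₀ ℝ} (hc : c ∈ FundIcc) :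
    1 ≤ l1Fin c := by
  obtain ⟨-, hbd1, -⟩ := hc
  set g := pointCochain fun x : Icc01 => if x = pt1 then (1 : ℝ) else 0 with hg_def
  have hg : evalChain g (chainBd c) = 1 := by
    refine Eq.trans (Finset.sum_congr rfl fun τ _ => ?_) hbd1
    simp [hg_def, pointCochain]
  have hc1 : 1 ≤ ∑ σ ∈ c.support, |c σ| :=
    calc 1 = |evalChain (cobd g) c| := by rw [← evalChain_chainBd, hg, abs_one]
      _ ≤ ∑ σ ∈ c.support, |c σ| := abs_sum_mul_le_sum_abs _ fun σ _ =>
        abs_cobd_pointCochain_le (fun _ => by split_ifs <;> norm_num)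
          (fun _ => by split_ifs <;> norm_num) σ
  rw [l1Fin_eq_ofReal]
  exact ENNReal.one_le_ofReal.mpr hc1

end ClosedInterval

/-- for `M = (0,1)` the locally finite simplicial volume is infinite,
`‖M‖_lf = +∞`, whereas for `V = [0,1]` the relative simplicial volume is
`‖V,∂V‖ = 1`. -/
theorem interval_simplicial_volumes :
    (⨅ z ∈ FundIoo, l1Lf z) = ⊤ ∧ (⨅ c ∈ FundIcc, l1Fin c) = 1 := by
  refine ⟨iInf₂_eq_top.mpr fun z hz => l1Lf_eq_top_of_mem_fundIoo hz, le_antisymm ?_ ?_⟩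
  · calc (⨅ c ∈ FundIcc, l1Fin c) ≤ l1Fin (Finsupp.single intervalSimplex 1) :=
          iInf₂_le _ single_intervalSimplex_mem_fundIcc
      _ = 1 := by simp [l1Fin]
  · exact le_iInf₂ fun c hc => one_le_l1Fin_of_mem_fundIcc hc
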